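/- Consider real affine conics, i.e. equivalence classes, up to nonzero real scaling, of nonzero real polynomials q(x,y) of degree at most 2; say such a conic is tangent to an affine line L if the restriction of q to a linear parametrization of L is a polynomial of degree exactly 2 with a double root. Then: (a) there are exactly 2 real conics passing through the four points (1,0), (-1,0), (0,1), (0,-1) and tangent to the line x = 2, and both are smooth (their associated symmetric 3x3 matrices are nondegenerate); (b) there are no real conics passing through the four points (1,0), (-1,0), (0,1), (0,3) and tangent to the line y = -1. In particular, the number of real conics through four fixed points tangent to a given line depends on the configuration of the points. -/

import Mathlib

noncomputable section

/-- The value at `(x, y)` of the affine conic with coefficient vector `q`,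
`q₀x² + q₁xy + q₂y² + q₃x + q₄y + q₅`. -/
def qval (q : Fin 6 → ℝ) (x y : ℝ) : ℝ :=
  q 0 * x ^ 2 + q 1 * (x * y) + q 2 * y ^ 2 + q 3 * x + q 4 * y + q 5

/-- The symmetric `3×3` matrix associated with the affine conic `q`. -/
def affMat (q : Fin 6 → ℝ) : Matrix (Fin 3) (Fin 3) ℝ :=
  !![q 0, q 1 / 2, q 3 / 2; q 1 / 2, q 2, q 4 / 2; q 3 / 2, q 4 / 2, q 5]

/-- The conic `q` is tangent to the affine line `s ↦ (p₁ + s u₁, p₂ + s u₂)`: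
the restriction of `q` to this linear parametrization is a polynomial of degree exactly
`2` in `s` having a double root (vanishing discriminant). -/
def TangentLineAff (q : Fin 6 → ℝ) (p₁ p₂ u₁ u₂ : ℝ) : Prop :=
  (q 0 * u₁ ^ 2 + q 1 * (u₁ * u₂) + q 2 * u₂ ^ 2) ≠ 0 ∧
  (2 * q 0 * p₁ * u₁ + q 1 * (p₁ * u₂ + p₂ * u₁) + 2 * q 2 * p₂ * u₂
      + q 3 * u₁ + q 4 * u₂) ^ 2 -
    4 * (q 0 * u₁ ^ 2 + q 1 * (u₁ * u₂) + q 2 * u₂ ^ 2) * qval q p₁ p₂ = 0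

/-!
The conics through four points in general position form a pencil, and tangency to a line is
a homogeneous quadratic condition on the pencil parameter `[a : c]`. Through the vertices
`(±1, 0), (0, ±1)` of a square the pencil is `a (x² + y² - 1) + c xy`, and tangency to `x = 2`
reads `c² = 3a²`, with the two real solutions `c = ±√3 a`. Through `(±1, 0), (0, 1), (0, 3)`,
where `(0, 1)` lies inside the triangle of the other three, the pencil is
`b (-3x² + y² - 4y + 3) + c xy`, and tangency to `y = -1` reads `c² + 96 b² = 0`, which has
no real solution with `b ≠ 0`.
-/

theorem eq_of_eq_smul_of_apply_eq {ι K : Type*} [Field K] {q q' : ι → K} {r : K} (i : ι)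
    (h : q = r • q') (hi : q i = q' i) (hi' : q' i ≠ 0) : q = q' := by
  have hr : r = 1 := by
    rw [h, Pi.smul_apply, smul_eq_mul] at hi
    exact (mul_eq_right₀ hi').mp hi
  rw [h, hr, one_smul]

def squarePencil (a c : ℝ) : Fin 6 → ℝ := ![a, c, a, 0, 0, -a]

def trianglePencil (b c : ℝ) : Fin 6 → ℝ := ![-3 * b, c, b, 0, -4 * b, 3 * b]

theorem qval_eq_zero_square_iff (q : Fin 6 → ℝ) :
    (qval q 1 0 = 0 ∧ qval q (-1) 0 = 0 ∧ qval q 0 1 = 0 ∧ qval q 0 (-1) = 0) ↔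
      q = squarePencil (q 0) (q 1) := by
  constructor
  · rintro ⟨h₁, h₂, h₃, h₄⟩
    simp only [qval] at h₁ h₂ h₃ h₄
    funext i
    fin_cases i <;> simp [squarePencil] <;> linarith
  · intro h
    rw [h]
    simp [qval, squarePencil]

theorem qval_eq_zero_triangle_iff (q : Fin 6 → ℝ) :
    (qval q 1 0 = 0 ∧ qval q (-1) 0 = 0 ∧ qval q 0 1 = 0 ∧ qval q 0 3 = 0) ↔
      q = trianglePencil (q 2) (q 1) := by
  constructor
  · rintro ⟨h₁, h₂, h₃, h₄⟩
    simp only [qval] at h₁ h₂ h₃ h₄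
    funext i
    fin_cases i <;> simp [trianglePencil] <;> linarith
  · intro h
    rw [h]
    simp only [qval, trianglePencil, Matrix.cons_val_zero, Matrix.cons_val_one, Matrix.cons_val]
    refine ⟨by ring, by ring, by ring, by ring⟩

theorem tangentLineAff_squarePencil_iff (a c : ℝ) :
    TangentLineAff (squarePencil a c) 2 0 0 1 ↔ a ≠ 0 ∧ c ^ 2 = 3 * a ^ 2 := by
  simp only [TangentLineAff, qval, squarePencil, Matrix.cons_val_zero, Matrix.cons_val_one,
    Matrix.cons_val]
  exact and_congr (by norm_num)
    ⟨fun h ↦ by linear_combination h / 4, fun h ↦ by linear_combination 4 * h⟩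

theorem not_tangentLineAff_trianglePencil (b c : ℝ) :
    ¬ TangentLineAff (trianglePencil b c) 0 (-1) 1 0 := by
  simp only [TangentLineAff, qval, trianglePencil, Matrix.cons_val_zero, Matrix.cons_val_one,
    Matrix.cons_val]
  rintro ⟨hlead, hdisc⟩
  have hsum : c ^ 2 + 96 * b ^ 2 = 0 := by linear_combination hdisc
  have hb : b = 0 := by nlinarith [sq_nonneg c, sq_nonneg b]
  exact hlead (by rw [hb]; ring)

theorem det_affMat_squarePencil (a c : ℝ) :
    (affMat (squarePencil a c)).det = a * (c ^ 2 - 4 * a ^ 2) / 4 := by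
  rw [affMat, Matrix.det_fin_three]
  simp only [squarePencil, Matrix.of_apply, Matrix.cons_val', Matrix.cons_val_zero,
    Matrix.cons_val_one, Matrix.cons_val, Matrix.cons_val_fin_one]
  ring

theorem squarePencil_eq_smul {a : ℝ} (ha : a ≠ 0) (c : ℝ) :
    squarePencil a c = a • squarePencil 1 (c / a) := by
  funext i
  fin_cases i <;> simp [squarePencil, mul_div_cancel₀ c ha]

theorem squarePencil_one_spec {c : ℝ} (hc : c ^ 2 = 3) :
    squarePencil 1 c ≠ 0 ∧
      qval (squarePencil 1 c) 1 0 = 0 ∧ qval (squarePencil 1 c) (-1) 0 = 0 ∧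
      qval (squarePencil 1 c) 0 1 = 0 ∧ qval (squarePencil 1 c) 0 (-1) = 0 ∧
      TangentLineAff (squarePencil 1 c) 2 0 0 1 ∧ (affMat (squarePencil 1 c)).det ≠ 0 := by
  obtain ⟨h₁, h₂, h₃, h₄⟩ := (qval_eq_zero_square_iff (squarePencil 1 c)).mpr
    (by simp [squarePencil])
  refine ⟨fun h ↦ by simpa [squarePencil] using congrFun h 0, h₁, h₂, h₃, h₄, ?_, ?_⟩
  · exact (tangentLineAff_squarePencil_iff 1 c).mpr ⟨one_ne_zero, by rw [hc]; norm_num⟩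
  · rw [det_affMat_squarePencil, hc]
    norm_num

theorem exists_eq_smul_squarePencil_of_tangent {q : Fin 6 → ℝ}
    (hq : qval q 1 0 = 0 ∧ qval q (-1) 0 = 0 ∧ qval q 0 1 = 0 ∧ qval q 0 (-1) = 0)
    (ht : TangentLineAff q 2 0 0 1) :
    q 0 ≠ 0 ∧ ∃ c, (c = √3 ∨ c = -√3) ∧ q = q 0 • squarePencil 1 c := by
  rw [qval_eq_zero_square_iff] at hq
  rw [hq, tangentLineAff_squarePencil_iff] at ht
  obtain ⟨ha, hc⟩ := ht
  refine ⟨ha, q 1 / q 0, ?_, hq.trans (squarePencil_eq_smul ha _)⟩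
  rw [← sq_eq_sq_iff_eq_or_eq_neg, div_pow, hc, Real.sq_sqrt zero_le_three]
  field_simp

/-- (a) There are exactly two real conics through `(1,0), (-1,0), (0,1), (0,-1)` tangent
to the line `x = 2`, and both are smooth; (b) there is no real conic through
`(1,0), (-1,0), (0,1), (0,3)` tangent to the line `y = -1`.  In particular, the number of
real conics through four fixed points tangent to a given line depends on the
configuration of the points. -/
theorem real_conics_through_four_points_tangent_to_line_not_invariant :
    (∃ S : Finset (Fin 6 → ℝ), S.card = 2 ∧
      (∀ q ∈ S, q ≠ 0 ∧
        qval q 1 0 = 0 ∧ qval q (-1) 0 = 0 ∧ qval q 0 1 = 0 ∧ qval q 0 (-1) = 0 ∧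
        TangentLineAff q 2 0 0 1 ∧ (affMat q).det ≠ 0) ∧
      (∀ q : Fin 6 → ℝ,
        (q ≠ 0 ∧ qval q 1 0 = 0 ∧ qval q (-1) 0 = 0 ∧ qval q 0 1 = 0 ∧
          qval q 0 (-1) = 0 ∧ TangentLineAff q 2 0 0 1) →
        ∃ q' ∈ S, ∃ r : ℝ, r ≠ 0 ∧ q = r • q') ∧
      (∀ q ∈ S, ∀ q' ∈ S, (∃ r : ℝ, r ≠ 0 ∧ q = r • q') → q = q')) ∧
    (¬ ∃ q : Fin 6 → ℝ, q ≠ 0 ∧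
      qval q 1 0 = 0 ∧ qval q (-1) 0 = 0 ∧ qval q 0 1 = 0 ∧ qval q 0 3 = 0 ∧
      TangentLineAff q 0 (-1) 1 0) := by
  have hsq : √3 ^ 2 = 3 := Real.sq_sqrt zero_le_three
  refine ⟨⟨{squarePencil 1 √3, squarePencil 1 (-√3)}, ?_, ?_, ?_, ?_⟩, ?_⟩
  · refine Finset.card_pair fun h ↦ ?_
    have h₁ : √3 = -√3 := by simpa [squarePencil] using congrFun h 1
    exact Real.sqrt_ne_zero'.mpr zero_lt_three (self_eq_neg.mp h₁)
  · simp only [Finset.mem_insert, Finset.mem_singleton]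
    rintro q (rfl | rfl)
    · exact squarePencil_one_spec hsq
    · exact squarePencil_one_spec (by rw [neg_sq, hsq])
  · rintro q ⟨-, h₁, h₂, h₃, h₄, ht⟩
    obtain ⟨ha, c, hc, hq⟩ := exists_eq_smul_squarePencil_of_tangent ⟨h₁, h₂, h₃, h₄⟩ ht
    exact ⟨squarePencil 1 c, by rcases hc with rfl | rfl <;> simp, q 0, ha, hq⟩
  · rintro q hq q' hq' ⟨r, -, h⟩
    have h₀ : ∀ p ∈ ({squarePencil 1 √3, squarePencil 1 (-√3)} : Finset _), p 0 = 1 := by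
      simp [squarePencil]
    exact eq_of_eq_smul_of_apply_eq 0 h (by rw [h₀ q hq, h₀ q' hq']) (by simp [h₀ q' hq'])
  · rintro ⟨q, -, h₁, h₂, h₃, h₄, ht⟩
    rw [(qval_eq_zero_triangle_iff q).mp ⟨h₁, h₂, h₃, h₄⟩] at ht
    exact not_tangentLineAff_trianglePencil _ _ ht

end
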